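/- The set of Rota–Baxter operators of weight one on the truncated polynomial algebra R = K ⊕ V is in bijection with the Cartesian product {0, -1} × {Q ∈ End_K(V) : Q² = Q}; equivalently, it is (isomorphic to) the disjoint union of two copies of the set of idempotent n × n matrices over K, via P ↦ (P(1), -P|_V). -/

import Mathlib

/-!
Write `P 1 = α + v` and `P w = f w + g w` for `w ∈ V`, so that `g = sndBlock P`. The identity at
`(w, w)` reads `f(w)² = 2 f(w)²` in the scalar component, so `f = 0`. At `(1, w)` it gives
`g² = -g`. At `(1, 1)` it gives `α² + α = 0` and `2 g(v) = -v`; applying `g` to the latter yields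
`-2 g(v) = -g(v)`, so `g(v) = 0` and then `v = 0`. Hence `P` acts as `α` on `K` and as `g` on `V`,
and conversely every such pair with `α ∈ {0, -1}` and `-g` idempotent satisfies the identity.
-/

open TrivSqZeroExt

def IsRotaBaxter {R A : Type*} [Semiring R] [NonUnitalNonAssocSemiring A] [Module R A]
    (c : R) (P : A →ₗ[R] A) : Prop :=
  ∀ x y, P x * P y = P (x * P y + P x * y + c • (x * y))

namespace TrivSqZeroExt

local notation "tsze" => TrivSqZeroExt

variable {R M : Type*} [CommRing R] [AddCommGroup M] [Module R M]

theorem linearMap_apply_eq (P : tsze R M →ₗ[R] tsze R M) (x : tsze R M) :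
    P x = x.fst • P 1 + P (inr x.snd) :=
  calc P x = P (x.fst • 1 + inr x.snd) := congrArg P (ext (by simp) (by simp))
    _ = x.fst • P 1 + P (inr x.snd) := by rw [map_add, map_smul]

def sndBlock (P : tsze R M →ₗ[R] tsze R M) : M →ₗ[R] M :=
  sndHom R M ∘ₗ P ∘ₗ inrHom R M

def rotaBaxterOp (α : R) (Q : M →ₗ[R] M) : tsze R M →ₗ[R] tsze R M where
  toFun x := inl (α * x.fst) - inr (Q x.snd)
  map_add' x y := ext (by simp [mul_add]) (by simp [add_comm])
  map_smul' r x := ext (by simp [mul_left_comm]) (by simp)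

@[simp] theorem fst_rotaBaxterOp (α : R) (Q : M →ₗ[R] M) (x : tsze R M) :
    (rotaBaxterOp α Q x).fst = α * x.fst := by simp [rotaBaxterOp]

@[simp] theorem snd_rotaBaxterOp (α : R) (Q : M →ₗ[R] M) (x : tsze R M) :
    (rotaBaxterOp α Q x).snd = -Q x.snd := by simp [rotaBaxterOp]

@[simp] theorem sndBlock_rotaBaxterOp (α : R) (Q : M →ₗ[R] M) :
    sndBlock (rotaBaxterOp α Q) = -Q := by
  ext m
  simp [sndBlock]

variable [Module Rᵐᵒᵖ M]

theorem mul_inr_eq_smul (x : tsze R M) (m : M) : x * inr m = x.fst • inr m :=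
  ext (by simp [mul_comm]) (by simp)

variable [IsCentralScalar R M]

theorem inr_mul_eq_smul (m : M) (x : tsze R M) : inr m * x = x.fst • inr m :=
  ext (by simp) (by simp)

theorem isRotaBaxter_rotaBaxterOp {α : R} (hα : α = 0 ∨ α = -1) {Q : M →ₗ[R] M}
    (hQ : Q ∘ₗ Q = Q) : IsRotaBaxter 1 (rotaBaxterOp α Q) := by
  have hQ' (m : M) : Q (Q m) = Q m := LinearMap.congr_fun hQ m
  intro x y
  refine ext ?_ ?_
  · rcases hα with rfl | rfl <;> simp
  · simp only [snd_mul, snd_add, fst_rotaBaxterOp, snd_rotaBaxterOp, smul_neg, one_smul,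
      op_smul_eq_smul, map_add, map_neg, map_smul, hQ', neg_add_rev, neg_neg]
    module

end TrivSqZeroExt

namespace IsRotaBaxter

variable {R M : Type*} [CommRing R] [AddCommGroup M] [Module R M] [Module Rᵐᵒᵖ M]
  [IsCentralScalar R M] {P : TrivSqZeroExt R M →ₗ[R] TrivSqZeroExt R M}

theorem fst_apply_inr [IsReduced R] {c : R} (hP : IsRotaBaxter c P) (m : M) :
    (P (inr m)).fst = 0 := by
  have h := congrArg fst (hP (inr m) (inr m))
  simp only [inr_mul_eq_smul, mul_inr_eq_smul, fst_inr, zero_smul, smul_zero, add_zero, map_add,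
    map_smul, fst_mul, fst_add, fst_smul, smul_eq_mul] at h
  refine IsReduced.eq_zero _ ⟨2, ?_⟩
  linear_combination -h

theorem apply_inr [IsReduced R] {c : R} (hP : IsRotaBaxter c P) (m : M) :
    P (inr m) = inr (sndBlock P m) :=
  ext (hP.fst_apply_inr m) rfl

theorem sndBlock_comp_self [IsReduced R] (hP : IsRotaBaxter 1 P) :
    sndBlock P ∘ₗ sndBlock P = -sndBlock P := by
  ext m
  have h := congrArg snd (hP 1 (inr m))
  simp only [one_mul, one_smul, mul_inr_eq_smul, map_add, map_smul, hP.apply_inr, snd_smul,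
    snd_add, snd_inr] at h
  simp only [LinearMap.comp_apply, LinearMap.neg_apply]
  linear_combination (norm := module) -h

theorem apply_apply_one [IsReduced R] {c : R} (hP : IsRotaBaxter c P) :
    P (P 1) = (P 1).fst • P 1 + inr (sndBlock P (P 1).snd) := by
  rw [linearMap_apply_eq P (P 1), hP.apply_inr]

theorem fst_apply_one [NoZeroDivisors R] (hP : IsRotaBaxter 1 P) :
    (P 1).fst = 0 ∨ (P 1).fst = -1 := by
  have h := congrArg fst (hP 1 1)
  simp only [one_mul, mul_one, one_smul, map_add, hP.apply_apply_one, fst_mul, fst_add,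
    fst_smul, fst_inr, smul_eq_mul, add_zero] at h
  have h' : (P 1).fst * ((P 1).fst + 1) = 0 := by linear_combination -h
  exact (mul_eq_zero.mp h').imp_right eq_neg_of_add_eq_zero_left

theorem snd_apply_one [IsReduced R] (hP : IsRotaBaxter 1 P) : (P 1).snd = 0 := by
  have h := congrArg snd (hP 1 1)
  simp only [one_mul, mul_one, one_smul, map_add, hP.apply_apply_one, snd_mul, snd_add,
    snd_smul, snd_inr, op_smul_eq_smul] at h
  have hv : sndBlock P (P 1).snd + sndBlock P (P 1).snd + (P 1).snd = 0 := by
    linear_combination (norm := module) -h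
  have hgv : sndBlock P (P 1).snd = 0 := by
    have h' := congrArg (sndBlock P) hv
    rw [map_add, map_add, ← LinearMap.comp_apply, hP.sndBlock_comp_self, map_zero,
      LinearMap.neg_apply] at h'
    linear_combination (norm := module) -h'
  linear_combination (norm := module) hv - (2 : R) • hgv

theorem eq_rotaBaxterOp [IsReduced R] (hP : IsRotaBaxter 1 P) :
    P = rotaBaxterOp (P 1).fst (-sndBlock P) := by
  ext x : 1
  rw [linearMap_apply_eq P x, hP.apply_inr]
  ext <;> simp [hP.snd_apply_one, mul_comm]

end IsRotaBaxter

namespace TrivSqZeroExt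

variable (R M : Type*) [CommRing R] [NoZeroDivisors R] [AddCommGroup M] [Module R M]
  [Module Rᵐᵒᵖ M] [IsCentralScalar R M]

def rotaBaxterOneEquiv :
    {P : TrivSqZeroExt R M →ₗ[R] TrivSqZeroExt R M // IsRotaBaxter 1 P} ≃
      {α : R // α = 0 ∨ α = -1} × {Q : M →ₗ[R] M // Q ∘ₗ Q = Q} where
  toFun P := (⟨(P.1 1).fst, P.2.fst_apply_one⟩, ⟨-sndBlock P.1, by
    rw [LinearMap.neg_comp, LinearMap.comp_neg, neg_neg, P.2.sndBlock_comp_self]⟩)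
  invFun p := ⟨rotaBaxterOp p.1.1 p.2.1, isRotaBaxter_rotaBaxterOp p.1.2 p.2.2⟩
  left_inv P := Subtype.ext P.2.eq_rotaBaxterOp.symm
  right_inv p := Prod.ext (Subtype.ext (by simp)) (Subtype.ext (by simp))

end TrivSqZeroExt

theorem weight_one_bijection_general {K : Type*} [Field K] {n : ℕ} :
    ∃ e : {P : TrivSqZeroExt K (Fin n → K) →ₗ[K] TrivSqZeroExt K (Fin n → K) //
            ∀ x y, P x * P y = P (x * P y + P x * y + (1 : K) • (x * y))} ≃
          ({α : K // α = 0 ∨ α = -1} ×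
            {Q : (Fin n → K) →ₗ[K] (Fin n → K) // Q ∘ₗ Q = Q}),
      ∀ P, ((e P).1 : K) = (P.1 1).fst ∧
        ((e P).2 : (Fin n → K) →ₗ[K] (Fin n → K)) =
          -((sndHom K (Fin n → K)) ∘ₗ P.1 ∘ₗ (inrHom K (Fin n → K))) :=
  ⟨rotaBaxterOneEquiv K (Fin n → K), fun _ => ⟨rfl, rfl⟩⟩

/-- the set of weight-one Rota–Baxter operators on the truncated polynomial
algebra `R = K ⊕ V` is in bijection with `{0, -1} × {Q ∈ End_K(V) : Q² = Q}`
(equivalently, a disjoint union of two copies of the set of idempotents),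
via `P ↦ (P 1, -P|_V)`. -/
theorem weight_one_bijection {K : Type*} [Field K] [CharZero K] {n : ℕ} (hn : 1 ≤ n) :
    ∃ e : {P : TrivSqZeroExt K (Fin n → K) →ₗ[K] TrivSqZeroExt K (Fin n → K) //
            ∀ x y, P x * P y = P (x * P y + P x * y + (1 : K) • (x * y))} ≃
          ({α : K // α = 0 ∨ α = -1} ×
            {Q : (Fin n → K) →ₗ[K] (Fin n → K) // Q ∘ₗ Q = Q}),
      ∀ P, ((e P).1 : K) = (P.1 1).fst ∧
        ((e P).2 : (Fin n → K) →ₗ[K] (Fin n → K)) =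
          -((sndHom K (Fin n → K)) ∘ₗ P.1 ∘ₗ (inrHom K (Fin n → K))) :=
  weight_one_bijection_general
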